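/- As n → ∞, max_{0 ≤ k ≤ n} | s_k² / s_n² − Σ_{i=1}^k (Z_i − Z̄_n)² / Σ_{i=1}^n (Z_i − Z̄_n)² | converges to 0 in probability; that is, for every ε > 0, P( max_{0 ≤ k ≤ n} | s_k²/s_n² − Σ_{i=1}^k (Z_i − Z̄_n)² / Σ_{i=1}^n (Z_i − Z̄_n)² | ≥ ε ) → 0, where Z̄_n := n^{−1} Σ_{i=1}^n Z_i and empty sums are 0. -/

import Mathlib

/-!
Write `A_k = ∑_{i<k} Z_i²`, `B_k = s_k²` and `T_k = ∑_{i<k} (Z_i - Z̄_n)²`. Deterministically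
`|T_k - A_k| ≤ θ A_n + (1 + θ⁻¹) n Z̄_n²`, so the ratios `B_k / B_n` and `T_k / T_n` are uniformly
close as soon as `max_{k ≤ n} |A_k - B_k| ≤ c B_n` and `n Z̄_n² ≤ c² B_n`. The second condition fails
with probability at most `1 / (c² n)` by Markov's inequality, because `E (∑_{i<n} Z_i)² = B_n`.

For the first one, split `Z_i² = truncSq c' Z_i + (Z_i² - truncSq c' Z_i)` at the level `c' = δ s_n`.
The truncated parts have total variance at most `δ² B_n²` (Chebyshev), and the remainders have total
mean equal to the Lindeberg sum (Markov). Chebyshev only controls finitely many `k` at once, so it is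
applied at the `m + 1` indices where `B_k` first reaches `j B_n / m`. Since `A` and `B` are
nondecreasing, and `B` has jumps `σ_i² = o(B_n)` by Feller's condition (a consequence of Lindeberg's),
the deviation at every `k ≤ n` is within `B_n / m + o(B_n)` of the deviation at a grid index.
-/

open MeasureTheory ProbabilityTheory Filter
open scoped Classical

open Finset Topology

lemma abs_div_sub_div_le_two_mul {bk bn tk tn c : ℝ} (hbn : 0 < bn) (hc : c < 1)
    (htk : 0 ≤ tk) (htkn : tk ≤ tn) (hk : |tk - bk| ≤ c * bn) (hn : |tn - bn| ≤ c * bn) :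
    |bk / bn - tk / tn| ≤ 2 * c := by
  have htn : 0 < tn := by nlinarith [abs_le.1 hn]
  have key : bk / bn - tk / tn = (bk - tk) / bn + tk / tn * ((tn - bn) / bn) := by
    field_simp; ring
  calc |bk / bn - tk / tn| ≤ |(bk - tk) / bn| + |tk / tn| * |(tn - bn) / bn| := by
        rw [key, ← abs_mul]; exact abs_add_le _ _
    _ ≤ c + 1 * c := by
        gcongr
        · rw [abs_div, abs_of_pos hbn, div_le_iff₀ hbn, abs_sub_comm]; exact hk
        · rw [abs_div, abs_of_pos htn, abs_of_nonneg htk]; exact div_le_one_of_le₀ htkn htn.le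
        · rw [abs_div, abs_of_pos hbn, div_le_iff₀ hbn]; exact hn
    _ = 2 * c := by ring

lemma abs_sub_sq_sub_sq_le (x v : ℝ) {θ : ℝ} (hθ : 0 < θ) :
    |(x - v) ^ 2 - x ^ 2| ≤ θ * x ^ 2 + (1 + θ⁻¹) * v ^ 2 := by
  have young : 2 * |x * v| ≤ θ * x ^ 2 + θ⁻¹ * v ^ 2 := by
    refine le_of_mul_le_mul_left ?_ hθ
    have : θ * (θ * x ^ 2 + θ⁻¹ * v ^ 2) = (θ * |x|) ^ 2 + |v| ^ 2 := by
      field_simp; rw [sq_abs, sq_abs]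
    rw [this, abs_mul]
    nlinarith [sq_nonneg (θ * |x| - |v|)]
  calc |(x - v) ^ 2 - x ^ 2| = |v ^ 2 - 2 * (x * v)| := by ring_nf
    _ ≤ v ^ 2 + 2 * |x * v| := by
        refine (abs_sub _ _).trans ?_
        rw [abs_of_nonneg (sq_nonneg v), abs_mul, abs_two]
    _ ≤ θ * x ^ 2 + (1 + θ⁻¹) * v ^ 2 := by linarith

lemma abs_sum_sub_sq_sub_sum_sq_le (z : ℕ → ℝ) (v : ℝ) {θ : ℝ} (hθ : 0 < θ) {k n : ℕ}
    (hkn : k ≤ n) :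
    |∑ i ∈ range k, (z i - v) ^ 2 - ∑ i ∈ range k, z i ^ 2|
      ≤ θ * ∑ i ∈ range n, z i ^ 2 + (1 + θ⁻¹) * n * v ^ 2 := by
  calc _ ≤ ∑ i ∈ range k, (θ * z i ^ 2 + (1 + θ⁻¹) * v ^ 2) := by
        rw [← sum_sub_distrib]
        exact (abs_sum_le_sum_abs _ _).trans (sum_le_sum fun i _ => abs_sub_sq_sub_sq_le _ _ hθ)
    _ = θ * ∑ i ∈ range k, z i ^ 2 + (1 + θ⁻¹) * k * v ^ 2 := by
        rw [sum_add_distrib, ← mul_sum, sum_const, card_range, nsmul_eq_mul]; ring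
    _ ≤ _ := by gcongr

lemma abs_sum_sub_sq_sub_le {z b : ℕ → ℝ} {n k : ℕ} {c v : ℝ} (hc : 0 < c) (hc1 : c ≤ 1)
    (hb : 0 ≤ b n) (hsq : ∀ k ≤ n, |∑ i ∈ range k, z i ^ 2 - b k| ≤ c * b n)
    (hv : n * v ^ 2 ≤ c ^ 2 * b n) (hk : k ≤ n) :
    |∑ i ∈ range k, (z i - v) ^ 2 - b k| ≤ 5 * c * b n := by
  have hcross := abs_sum_sub_sq_sub_sum_sq_le z v hc hk
  have hAn : ∑ i ∈ range n, z i ^ 2 ≤ 2 * b n := by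
    linarith [(abs_le.1 (hsq n le_rfl)).2, mul_le_of_le_one_left hb hc1]
  have hmean : (1 + c⁻¹) * n * v ^ 2 ≤ 2 * c * b n := by
    calc (1 + c⁻¹) * n * v ^ 2 = (1 + c⁻¹) * (n * v ^ 2) := by ring
      _ ≤ (1 + c⁻¹) * (c ^ 2 * b n) := by gcongr
      _ = (c + 1) * c * b n := by field_simp
      _ ≤ 2 * c * b n := by gcongr; linarith
  calc _ ≤ |∑ i ∈ range k, (z i - v) ^ 2 - ∑ i ∈ range k, z i ^ 2|
        + |∑ i ∈ range k, z i ^ 2 - b k| := abs_sub_le _ _ _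
    _ ≤ (c * (2 * b n) + 2 * c * b n) + c * b n := by
        gcongr
        · exact hcross.trans (add_le_add (by gcongr) hmean)
        · exact hsq k hk
    _ = 5 * c * b n := by ring

lemma abs_div_sub_div_sum_sub_sq_le {z b : ℕ → ℝ} {n k : ℕ} {c v : ℝ} (hc : 0 < c)
    (hc5 : 5 * c < 1) (hbn : 0 < b n) (hsq : ∀ k ≤ n, |∑ i ∈ range k, z i ^ 2 - b k| ≤ c * b n)
    (hv : n * v ^ 2 ≤ c ^ 2 * b n) (hk : k ≤ n) :
    |b k / b n - (∑ i ∈ range k, (z i - v) ^ 2) / ∑ i ∈ range n, (z i - v) ^ 2| ≤ 10 * c := by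
  have hT := fun k (hk : k ≤ n) => abs_sum_sub_sq_sub_le hc (by linarith) hbn.le hsq hv hk
  have := abs_div_sub_div_le_two_mul hbn hc5 (sum_nonneg fun i _ => sq_nonneg (z i - v))
    (sum_le_sum_of_subset_of_nonneg (range_subset_range.2 hk) fun i _ _ => sq_nonneg _)
    (hT k hk) (hT n le_rfl)
  linarith

lemma abs_sub_le_max_add_sub_of_le_of_le {α : Type*} [Preorder α] {a b : α → ℝ} (ha : Monotone a)
    (hb : Monotone b) {i k j : α} (hik : i ≤ k) (hkj : k ≤ j) :
    |a k - b k| ≤ max |a i - b i| |a j - b j| + (b j - b i) := by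
  have := ha hik; have := ha hkj; have := hb hik; have := hb hkj
  have := le_max_left |a i - b i| |a j - b j|; have := le_max_right |a i - b i| |a j - b j|
  rw [abs_le]
  constructor <;> linarith [neg_abs_le (a i - b i), le_abs_self (a j - b j)]

lemma natCast_mul_div_le {x : ℝ} (hx : 0 ≤ x) {j m : ℕ} (hj : j ≤ m) : (j : ℝ) * (x / m) ≤ x := by
  rw [mul_div_left_comm]
  exact mul_le_of_le_one_right hx (div_le_one_of_le₀ (by exact_mod_cast hj) m.cast_nonneg)

/-- Since `sInf ∅ = 0`, this is only meaningful when `b` reaches `y` somewhere. -/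
noncomputable def firstIndexGE (b : ℕ → ℝ) (y : ℝ) : ℕ := sInf {k | y ≤ b k}

section FirstIndexGE

variable {b : ℕ → ℝ} {y : ℝ} {n : ℕ}

lemma firstIndexGE_le (h : y ≤ b n) : firstIndexGE b y ≤ n := Nat.sInf_le h

lemma le_apply_firstIndexGE (h : y ≤ b n) : y ≤ b (firstIndexGE b y) :=
  Nat.sInf_mem (s := {k | y ≤ b k}) ⟨n, h⟩

lemma firstIndexGE_apply (hb : StrictMono b) : firstIndexGE b (b n) = n :=
  (firstIndexGE_le le_rfl).antisymm <| hb.le_iff_le.1 (le_apply_firstIndexGE le_rfl)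

lemma apply_firstIndexGE_le_max {γ : ℝ} (h : y ≤ b n) (hinc : ∀ i < n, b (i + 1) ≤ b i + γ) :
    b (firstIndexGE b y) ≤ max (b 0) (y + γ) := by
  rcases hk : firstIndexGE b y with _ | t
  · exact le_max_left _ _
  · have hlt : t < firstIndexGE b y := by omega
    have hbt : b t < y := not_le.1 (Nat.notMem_of_lt_sInf hlt)
    have htn : t < n := hlt.trans_le (firstIndexGE_le h)
    exact (hinc t htn).trans (by linarith [le_max_right (b 0) (y + γ)])

lemma exists_firstIndexGE_le_le (hb : StrictMono b) (hb0 : b 0 = 0) (hbn : 0 < b n) {m : ℕ}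
    (hm : m ≠ 0) {k : ℕ} (hk : k ≤ n) :
    ∃ j < m, firstIndexGE b (j * (b n / m)) ≤ k ∧
      k ≤ firstIndexGE b ((j + 1 : ℕ) * (b n / m)) := by
  set q := b n / m
  have hq : 0 < q := by positivity
  have hmq : (m : ℝ) * q = b n := mul_div_cancel₀ _ (Nat.cast_ne_zero.2 hm)
  have hbk : 0 ≤ b k := hb0 ▸ hb.monotone (Nat.zero_le k)
  have hfloor : (⌊b k / q⌋₊ : ℝ) * q ≤ b k := (le_div_iff₀ hq).1 (Nat.floor_le (by positivity))
  refine ⟨min ⌊b k / q⌋₊ (m - 1), by omega, firstIndexGE_le ?_, ?_⟩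
  · exact le_trans (by gcongr; exact min_le_left _ _) hfloor
  by_cases hj : ⌊b k / q⌋₊ ≤ m - 1
  · rw [min_eq_left hj]
    have hlt : b k < (⌊b k / q⌋₊ + 1 : ℕ) * q := by
      push_cast; exact (div_lt_iff₀ hq).1 (Nat.lt_floor_add_one _)
    have hlev : ((⌊b k / q⌋₊ + 1 : ℕ) : ℝ) * q ≤ b n := natCast_mul_div_le hbn.le (by omega)
    by_contra hlt'
    exact (hlt.trans_le (le_apply_firstIndexGE hlev)).not_ge (hb.monotone (not_le.1 hlt').le)
  · rw [min_eq_right (by omega), Nat.sub_add_cancel (by omega),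
      hmq, firstIndexGE_apply hb]
    exact hk

noncomputable def levelGrid (b : ℕ → ℝ) (n m : ℕ) : Finset ℕ :=
  (range (m + 1)).image fun j : ℕ => firstIndexGE b (j * (b n / m))

lemma card_levelGrid_le (b : ℕ → ℝ) (n m : ℕ) : #(levelGrid b n m) ≤ m + 1 :=
  card_image_le.trans (card_range _).le

lemma le_of_mem_levelGrid (hbn : 0 ≤ b n) {m k : ℕ} (hk : k ∈ levelGrid b n m) : k ≤ n := by
  obtain ⟨j, hj, rfl⟩ := mem_image.1 hk
  exact firstIndexGE_le (natCast_mul_div_le hbn (Nat.lt_succ_iff.1 (mem_range.1 hj)))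

theorem exists_mem_levelGrid_abs_sub_le {a : ℕ → ℝ} (ha : Monotone a) (hb : StrictMono b)
    (hb0 : b 0 = 0) (hbn : 0 < b n) {m : ℕ} (hm : m ≠ 0) {γ : ℝ} (hγ : 0 ≤ γ)
    (hinc : ∀ i < n, b (i + 1) ≤ b i + γ) {k : ℕ} (hk : k ≤ n) :
    ∃ g ∈ levelGrid b n m, |a k - b k| ≤ |a g - b g| + (b n / m + γ) := by
  obtain ⟨j, hjm, hlo, hhi⟩ := exists_firstIndexGE_le_le hb hb0 hbn hm hk
  set q := b n / m
  set g₁ := firstIndexGE b (j * q)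
  set g₂ := firstIndexGE b ((j + 1 : ℕ) * q)
  have hgap : b g₂ - b g₁ ≤ q + γ := by
    have hhi : b g₂ ≤ max (b 0) ((j + 1 : ℕ) * q + γ) :=
      apply_firstIndexGE_le_max (natCast_mul_div_le hbn.le hjm) hinc
    have hlo : j * q ≤ b g₁ := le_apply_firstIndexGE (natCast_mul_div_le hbn.le hjm.le)
    rw [hb0, max_eq_right (by positivity)] at hhi
    push_cast at hhi
    linarith
  have hsandwich := abs_sub_le_max_add_sub_of_le_of_le ha hb.monotone hlo hhi
  rcases le_total |a g₁ - b g₁| |a g₂ - b g₂| with h | h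
  · refine ⟨g₂, mem_image_of_mem _ (mem_range.2 (Nat.succ_lt_succ hjm)), ?_⟩
    rw [max_eq_right h] at hsandwich; linarith
  · refine ⟨g₁, mem_image_of_mem _ (mem_range.2 (hjm.trans (Nat.lt_succ_self m))), ?_⟩
    rw [max_eq_left h] at hsandwich; linarith

end FirstIndexGE

section Probability

variable {Ω : Type*} [MeasurableSpace Ω] {P : Measure Ω}

lemma measureReal_le_abs_sum_sub_sum_integral_le [IsFiniteMeasure P] {ι : Type*}
    {X : ι → Ω → ℝ} {s : Finset ι} (hX : ∀ i ∈ s, MemLp (X i) 2 P)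
    (hind : Set.Pairwise ↑s fun i j => IndepFun (X i) (X j) P) {t : ℝ} (ht : 0 < t) :
    P.real {ω | t ≤ |∑ i ∈ s, X i ω - ∑ i ∈ s, ∫ ω', X i ω' ∂P|}
      ≤ (∑ i ∈ s, variance (X i) P) / t ^ 2 := by
  have hcheb := meas_ge_le_variance_div_sq (memLp_finsetSum' s hX) ht
  simp only [Finset.sum_apply] at hcheb
  rw [IndepFun.variance_sum hX hind,
    integral_finsetSum s fun i hi => (hX i hi).integrable one_le_two] at hcheb
  exact ENNReal.toReal_le_of_le_ofReal
    (div_nonneg (sum_nonneg fun i _ => variance_nonneg _ _) (sq_nonneg t)) hcheb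

lemma tendsto_measure_zero_of_forall_eventually_measureReal_le [IsFiniteMeasure P] {ι : Type*}
    {l : Filter ι} {s : ι → Set Ω}
    (h : ∀ a > 0, ∀ᶠ i in l, P.real (s i) ≤ a) : Tendsto (fun i => P (s i)) l (𝓝 0) := by
  rw [ENNReal.tendsto_nhds_zero]
  intro ε hε
  obtain ⟨a, -, ha, haε⟩ := ENNReal.lt_iff_exists_real_btwn.1 hε
  filter_upwards [h a (ENNReal.ofReal_pos.1 ha)] with i hi
  rw [← ofReal_measureReal]
  exact (ENNReal.ofReal_le_ofReal hi).trans haε.le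

noncomputable def truncSq (c x : ℝ) : ℝ := if |x| < c then x ^ 2 else 0

section TruncSq

variable {c : ℝ}

lemma truncSq_nonneg (c x : ℝ) : 0 ≤ truncSq c x := by
  unfold truncSq; split_ifs <;> positivity

lemma truncSq_le_sq (c x : ℝ) : truncSq c x ≤ x ^ 2 := by
  unfold truncSq; split_ifs
  exacts [le_rfl, sq_nonneg x]

lemma truncSq_le (c x : ℝ) : truncSq c x ≤ c ^ 2 := by
  unfold truncSq; split_ifs with h
  · nlinarith [abs_nonneg x, sq_abs x]
  · positivity

lemma truncSq_sq_le (c x : ℝ) : truncSq c x ^ 2 ≤ c ^ 2 * x ^ 2 := by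
  rw [sq]
  exact mul_le_mul (truncSq_le c x) (truncSq_le_sq c x) (truncSq_nonneg c x) (sq_nonneg c)

lemma measurable_truncSq : Measurable (truncSq c) :=
  Measurable.ite (measurableSet_lt measurable_norm measurable_const) (measurable_id.pow_const 2)
    measurable_const

variable {Z : Ω → ℝ}

lemma memLp_truncSq_comp [IsFiniteMeasure P] (hZ : Measurable Z) :
    MemLp (fun ω => truncSq c (Z ω)) 2 P :=
  MemLp.of_bound (measurable_truncSq.comp hZ).aestronglyMeasurable (c ^ 2) <| ae_of_all _ fun ω => by
    rw [Real.norm_of_nonneg (truncSq_nonneg _ _)]; exact truncSq_le _ _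

lemma setIntegral_le_abs_sq_eq [IsFiniteMeasure P] (hZ : Measurable Z) (hZ2 : MemLp Z 2 P) :
    ∫ ω in {ω | c ≤ |Z ω|}, Z ω ^ 2 ∂P = ∫ ω, Z ω ^ 2 ∂P - ∫ ω, truncSq c (Z ω) ∂P := by
  rw [← integral_indicator (measurableSet_le measurable_const hZ.abs), eq_sub_iff_add_eq,
    ← integral_add _ ((memLp_truncSq_comp hZ).integrable one_le_two)]
  · congr 1 with ω
    simp only [Set.indicator_apply, Set.mem_ofPred_eq, truncSq]
    split_ifs <;> linarith
  · exact hZ2.integrable_sq.indicator (measurableSet_le measurable_const hZ.abs)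

variable [IsProbabilityMeasure P]

lemma integral_truncSq_comp_le (hZ : Measurable Z) : ∫ ω, truncSq c (Z ω) ∂P ≤ c ^ 2 := by
  calc ∫ ω, truncSq c (Z ω) ∂P ≤ ∫ _, c ^ 2 ∂P :=
        integral_mono ((memLp_truncSq_comp hZ).integrable one_le_two) (integrable_const _)
          fun ω => truncSq_le _ _
    _ = c ^ 2 := by simp

lemma variance_truncSq_comp_le (hZ : Measurable Z) (hZ2 : MemLp Z 2 P) :
    variance (fun ω => truncSq c (Z ω)) P ≤ c ^ 2 * ∫ ω, Z ω ^ 2 ∂P := by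
  calc variance (fun ω => truncSq c (Z ω)) P ≤ ∫ ω, truncSq c (Z ω) ^ 2 ∂P :=
        variance_le_expectation_sq (X := fun ω => truncSq c (Z ω))
          (measurable_truncSq.comp hZ).aestronglyMeasurable
    _ ≤ ∫ ω, c ^ 2 * Z ω ^ 2 ∂P :=
        integral_mono (memLp_truncSq_comp hZ).integrable_sq (hZ2.integrable_sq.const_mul _)
          fun ω => truncSq_sq_le _ _
    _ = c ^ 2 * ∫ ω, Z ω ^ 2 ∂P := integral_const_mul _ _

end TruncSq

variable [IsProbabilityMeasure P] {Z : ℕ → Ω → ℝ} {σ2 : ℕ → ℝ}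

lemma measureReal_le_abs_sum_truncSq_sub_le (hmeas : ∀ i, Measurable (Z i))
    (hindep : iIndepFun Z P) (hL2 : ∀ i, MemLp (Z i) 2 P) (c : ℝ) {t : ℝ} (ht : 0 < t) {k n : ℕ}
    (hk : k ≤ n) :
    P.real {ω | t ≤ |∑ i ∈ range k, truncSq c (Z i ω) - ∑ i ∈ range k, ∫ ω', truncSq c (Z i ω') ∂P|}
      ≤ c ^ 2 * (∑ i ∈ range n, ∫ ω, Z i ω ^ 2 ∂P) / t ^ 2 := by
  have hind : iIndepFun (fun i ω => truncSq c (Z i ω)) P :=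
    hindep.comp (fun _ => truncSq c) fun _ => measurable_truncSq
  refine (measureReal_le_abs_sum_sub_sum_integral_le (fun i _ => memLp_truncSq_comp (hmeas i))
    (fun i _ j _ hij => hind.indepFun hij) ht).trans (div_le_div_of_nonneg_right ?_ (sq_nonneg t))
  rw [mul_sum]
  exact (sum_le_sum fun i _ => variance_truncSq_comp_le (hmeas i) (hL2 i)).trans
    (sum_le_sum_of_subset_of_nonneg (range_subset_range.2 hk)
      fun i _ _ => mul_nonneg (sq_nonneg c) (integral_nonneg fun ω => sq_nonneg _))

lemma measureReal_le_sum_sq_sub_truncSq_le (hmeas : ∀ i, Measurable (Z i))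
    (hL2 : ∀ i, MemLp (Z i) 2 P) (c : ℝ) {t : ℝ} (ht : 0 < t) (n : ℕ) :
    P.real {ω | t ≤ ∑ i ∈ range n, (Z i ω ^ 2 - truncSq c (Z i ω))}
      ≤ (∑ i ∈ range n, ∫ ω in {ω | c ≤ |Z i ω|}, Z i ω ^ 2 ∂P) / t := by
  have hint : ∀ i, Integrable (fun ω => Z i ω ^ 2 - truncSq c (Z i ω)) P := fun i =>
    (hL2 i).integrable_sq.sub ((memLp_truncSq_comp (hmeas i)).integrable one_le_two)
  have hmean : ∫ ω, ∑ i ∈ range n, (Z i ω ^ 2 - truncSq c (Z i ω)) ∂P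
      = ∑ i ∈ range n, ∫ ω in {ω | c ≤ |Z i ω|}, Z i ω ^ 2 ∂P := by
    rw [integral_finsetSum _ fun i _ => hint i]
    refine sum_congr rfl fun i _ => ?_
    rw [integral_sub (hL2 i).integrable_sq ((memLp_truncSq_comp (hmeas i)).integrable one_le_two),
      setIntegral_le_abs_sq_eq (hmeas i) (hL2 i)]
  rw [le_div_iff₀ ht, mul_comm, ← hmean]
  exact mul_meas_ge_le_integral_of_nonneg (ae_of_all _ fun ω =>
    sum_nonneg fun i _ => sub_nonneg.2 (truncSq_le_sq _ _)) (integrable_finsetSum _ fun i _ => hint i) t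

lemma measureReal_exists_two_mul_le_abs_sum_sq_sub_le (hmeas : ∀ i, Measurable (Z i))
    (hindep : iIndepFun Z P) (hL2 : ∀ i, MemLp (Z i) 2 P) (hvar : ∀ i, ∫ ω, Z i ω ^ 2 ∂P = σ2 i)
    {n : ℕ} {s : Finset ℕ} (hs : ∀ k ∈ s, k ≤ n) (c : ℝ) {t : ℝ} (ht : 0 < t)
    (hL : ∑ i ∈ range n, ∫ ω in {ω | c ≤ |Z i ω|}, Z i ω ^ 2 ∂P ≤ t) :
    P.real {ω | ∃ k ∈ s, 2 * t ≤ |∑ i ∈ range k, Z i ω ^ 2 - ∑ i ∈ range k, σ2 i|}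
      ≤ #s * (c ^ 2 * (∑ i ∈ range n, σ2 i) / t ^ 2)
        + (∑ i ∈ range n, ∫ ω in {ω | c ≤ |Z i ω|}, Z i ω ^ 2 ∂P) / t := by
  set Y : ℕ → Ω → ℝ := fun i ω => truncSq c (Z i ω)
  set e : ℕ → ℝ := fun i => ∫ ω in {ω | c ≤ |Z i ω|}, Z i ω ^ 2 ∂P
  have hσ : ∀ i, σ2 i = ∫ ω, Y i ω ∂P + e i := fun i => by
    rw [show e i = _ from setIntegral_le_abs_sq_eq (hmeas i) (hL2 i), hvar i, add_sub_cancel]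
  have he : ∀ i, 0 ≤ e i := fun i =>
    setIntegral_nonneg (measurableSet_le measurable_const (hmeas i).abs) fun ω _ => sq_nonneg _
  have hsub : {ω | ∃ k ∈ s, 2 * t ≤ |∑ i ∈ range k, Z i ω ^ 2 - ∑ i ∈ range k, σ2 i|}
      ⊆ (⋃ k ∈ s, {ω | t ≤ |∑ i ∈ range k, Y i ω - ∑ i ∈ range k, ∫ ω', Y i ω' ∂P|})
        ∪ {ω | t ≤ ∑ i ∈ range n, (Z i ω ^ 2 - Y i ω)} := by
    rintro ω ⟨k, hks, hk⟩
    by_contra hω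
    simp only [Set.mem_union, Set.mem_iUnion, Set.mem_ofPred_eq, not_or, not_exists,
      not_le] at hω
    have hkn : range k ⊆ range n := range_subset_range.2 (hs k hks)
    have hr : ∑ i ∈ range k, (Z i ω ^ 2 - Y i ω) ≤ ∑ i ∈ range n, (Z i ω ^ 2 - Y i ω) :=
      sum_le_sum_of_subset_of_nonneg hkn fun i _ _ => sub_nonneg.2 (truncSq_le_sq _ _)
    have hr0 : 0 ≤ ∑ i ∈ range k, (Z i ω ^ 2 - Y i ω) :=
      sum_nonneg fun i _ => sub_nonneg.2 (truncSq_le_sq _ _)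
    have hek : ∑ i ∈ range k, e i ≤ t :=
      (sum_le_sum_of_subset_of_nonneg hkn fun i _ _ => he i).trans hL
    have hek0 : 0 ≤ ∑ i ∈ range k, e i := sum_nonneg fun i _ => he i
    have hsplit : ∑ i ∈ range k, Z i ω ^ 2 - ∑ i ∈ range k, σ2 i
        = (∑ i ∈ range k, Y i ω - ∑ i ∈ range k, ∫ ω', Y i ω' ∂P)
          + (∑ i ∈ range k, (Z i ω ^ 2 - Y i ω) - ∑ i ∈ range k, e i) := by
      simp only [hσ, sum_add_distrib, sum_sub_distrib]; ring
    rw [hsplit] at hk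
    have := (abs_add_le _ _).trans_lt (add_lt_add_of_lt_of_le (hω.1 k hks)
      (abs_sub_le_iff.2 ⟨by linarith, by linarith⟩ :
        |∑ i ∈ range k, (Z i ω ^ 2 - Y i ω) - ∑ i ∈ range k, e i| ≤ t))
    linarith
  have hYdev := fun k (hk : k ≤ n) => measureReal_le_abs_sum_truncSq_sub_le hmeas hindep hL2 c ht hk
  simp only [hvar] at hYdev
  calc _ ≤ P.real (⋃ k ∈ s, {ω | t ≤ |∑ i ∈ range k, Y i ω - ∑ i ∈ range k, ∫ ω', Y i ω' ∂P|})
        + P.real {ω | t ≤ ∑ i ∈ range n, (Z i ω ^ 2 - Y i ω)} :=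
        (measureReal_mono hsub).trans (measureReal_union_le _ _)
    _ ≤ ∑ k ∈ s, c ^ 2 * (∑ i ∈ range n, σ2 i) / t ^ 2 + (∑ i ∈ range n, e i) / t :=
        add_le_add ((measureReal_biUnion_finset_le _ _).trans
          (sum_le_sum fun k hk => hYdev k (hs k hk)))
          (measureReal_le_sum_sq_sub_truncSq_le hmeas hL2 c ht n)
    _ = _ := by rw [sum_const, nsmul_eq_mul]

lemma measureReal_exists_le_abs_sum_sq_sub_le (hmeas : ∀ i, Measurable (Z i))
    (hindep : iIndepFun Z P) (hL2 : ∀ i, MemLp (Z i) 2 P) (hvar : ∀ i, ∫ ω, Z i ω ^ 2 ∂P = σ2 i)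
    (hpos : ∀ i, 0 < σ2 i) {n m : ℕ} (hn : 0 < n) (hm : 0 < m) {η δ : ℝ} (hη : 0 < η)
    (hmη : 4 ≤ η * m) (hsmall : ∀ i < n, σ2 i ≤ η / 4 * ∑ j ∈ range n, σ2 j)
    (hL : (∑ j ∈ range n, σ2 j)⁻¹ * ∑ i ∈ range n,
        ∫ ω in {ω | δ * √(∑ j ∈ range n, σ2 j) ≤ |Z i ω|}, Z i ω ^ 2 ∂P ≤ η / 4) :
    P.real {ω | ∃ k ≤ n, η * ∑ i ∈ range n, σ2 i ≤
        |∑ i ∈ range k, Z i ω ^ 2 - ∑ i ∈ range k, σ2 i|}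
      ≤ (m + 1) * (4 * δ / η) ^ 2 + 4 / η * ((∑ j ∈ range n, σ2 j)⁻¹ * ∑ i ∈ range n,
        ∫ ω in {ω | δ * √(∑ j ∈ range n, σ2 j) ≤ |Z i ω|}, Z i ω ^ 2 ∂P) := by
  set b : ℕ → ℝ := fun k => ∑ i ∈ range k, σ2 i
  set L := ∑ i ∈ range n, ∫ ω in {ω | δ * √(b n) ≤ |Z i ω|}, Z i ω ^ 2 ∂P
  have hb : StrictMono b := strictMono_nat_of_lt_succ fun k => by
    simp only [b, sum_range_succ]; linarith [hpos k]
  have hbn : 0 < b n := sum_pos (fun i _ => hpos i) (nonempty_range_iff.2 hn.ne')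
  have hsub : {ω | ∃ k ≤ n, η * b n ≤ |∑ i ∈ range k, Z i ω ^ 2 - b k|}
      ⊆ {ω | ∃ k ∈ levelGrid b n m, 2 * (η / 4 * b n) ≤ |∑ i ∈ range k, Z i ω ^ 2 - b k|} := by
    rintro ω ⟨k, hk, hηk⟩
    have ha : Monotone fun k => ∑ i ∈ range k, Z i ω ^ 2 :=
      monotone_nat_of_le_succ fun k => by rw [sum_range_succ]; linarith [sq_nonneg (Z k ω)]
    have hinc : ∀ i < n, b (i + 1) ≤ b i + η / 4 * b n := fun i hi => by
      simp only [b, sum_range_succ]; linarith [hsmall i hi]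
    obtain ⟨g, hg, hbound⟩ := exists_mem_levelGrid_abs_sub_le ha hb (sum_range_zero σ2) hbn
      hm.ne' (by positivity) hinc hk
    have hstep : b n / m ≤ η / 4 * b n := by
      rw [div_le_iff₀ (by positivity)]; nlinarith
    exact ⟨g, hg, by linarith⟩
  have hL' : L ≤ η / 4 * b n := by
    rwa [inv_mul_le_iff₀ hbn, mul_comm] at hL
  refine (measureReal_mono hsub).trans <| (measureReal_exists_two_mul_le_abs_sum_sq_sub_le hmeas
    hindep hL2 hvar (fun k => le_of_mem_levelGrid hbn.le) (δ * √(b n)) (by positivity) hL').trans ?_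
  have hcard : (#(levelGrid b n m) : ℝ) ≤ m + 1 := by exact_mod_cast card_levelGrid_le b n m
  have hcheb : (δ * √(b n)) ^ 2 * b n / (η / 4 * b n) ^ 2 = (4 * δ / η) ^ 2 := by
    rw [mul_pow, Real.sq_sqrt hbn.le]; field_simp
  have hmarkov : L / (η / 4 * b n) = 4 / η * ((b n)⁻¹ * L) := by field_simp
  rw [hcheb, hmarkov]
  gcongr

lemma eventually_forall_le_mul_sum_of_lindeberg (hmeas : ∀ i, Measurable (Z i))
    (hL2 : ∀ i, MemLp (Z i) 2 P) (hvar : ∀ i, ∫ ω, Z i ω ^ 2 ∂P = σ2 i) (hpos : ∀ i, 0 < σ2 i)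
    (hLind : ∀ ε > (0 : ℝ), Tendsto (fun n => (∑ i ∈ range n, σ2 i)⁻¹ * ∑ i ∈ range n,
      ∫ ω in {ω | ε * √(∑ j ∈ range n, σ2 j) ≤ |Z i ω|}, Z i ω ^ 2 ∂P) atTop (𝓝 0))
    {η : ℝ} (hη : 0 < η) :
    ∀ᶠ n in atTop, ∀ i < n, σ2 i ≤ η * ∑ j ∈ range n, σ2 j := by
  set δ := √(η / 2)
  have hδ : 0 < δ := Real.sqrt_pos.2 (half_pos hη)
  filter_upwards [(hLind δ hδ).eventually_lt_const (half_pos hη), eventually_gt_atTop 0]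
    with n hL hn i hi
  set B := ∑ j ∈ range n, σ2 j
  have hB : 0 < B := sum_pos (fun i _ => hpos i) (nonempty_range_iff.2 hn.ne')
  have htail : ∫ ω in {ω | δ * √B ≤ |Z i ω|}, Z i ω ^ 2 ∂P < η / 2 * B := by
    refine lt_of_le_of_lt ?_ ((inv_mul_lt_iff₀ hB).1 hL |>.trans_eq (mul_comm _ _))
    exact single_le_sum (f := fun i => ∫ ω in {ω | δ * √B ≤ |Z i ω|}, Z i ω ^ 2 ∂P)
      (fun j _ => setIntegral_nonneg (measurableSet_le measurable_const (hmeas j).abs)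
        fun ω _ => sq_nonneg _) (mem_range.2 hi)
  have htrunc := integral_truncSq_comp_le (P := P) (c := δ * √B) (hmeas i)
  rw [mul_pow, Real.sq_sqrt (half_pos hη).le, Real.sq_sqrt hB.le] at htrunc
  rw [setIntegral_le_abs_sq_eq (hmeas i) (hL2 i), hvar i] at htail
  linarith

lemma integral_sum_sq_eq_sum (hindep : iIndepFun Z P) (hL2 : ∀ i, MemLp (Z i) 2 P)
    (hmean : ∀ i, ∫ ω, Z i ω ∂P = 0) (hvar : ∀ i, ∫ ω, Z i ω ^ 2 ∂P = σ2 i) (n : ℕ) :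
    ∫ ω, (∑ i ∈ range n, Z i ω) ^ 2 ∂P = ∑ i ∈ range n, σ2 i := by
  have hsum : MemLp (∑ i ∈ range n, Z i) 2 P := memLp_finsetSum' _ fun i _ => hL2 i
  have hcentered : ∀ X : Ω → ℝ, MemLp X 2 P → ∫ ω, X ω ∂P = 0 → variance X P = ∫ ω, X ω ^ 2 ∂P :=
    fun X hX h0 => variance_of_integral_eq_zero hX.aestronglyMeasurable.aemeasurable h0
  have hsum_mean : ∫ ω, (∑ i ∈ range n, Z i) ω ∂P = 0 := by
    simp only [Finset.sum_apply]
    rw [integral_finsetSum _ fun i _ => (hL2 i).integrable one_le_two]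
    exact sum_eq_zero fun i _ => hmean i
  have := hcentered _ hsum hsum_mean
  rw [IndepFun.variance_sum (fun i _ => hL2 i) (fun i _ j _ hij => hindep.indepFun hij)] at this
  simp only [Finset.sum_apply] at this
  rw [← this]
  exact sum_congr rfl fun i _ => (hcentered _ (hL2 i) (hmean i)).trans (hvar i)

lemma measureReal_le_mul_mean_sq_le (hindep : iIndepFun Z P) (hL2 : ∀ i, MemLp (Z i) 2 P)
    (hmean : ∀ i, ∫ ω, Z i ω ∂P = 0) (hvar : ∀ i, ∫ ω, Z i ω ^ 2 ∂P = σ2 i) {n : ℕ} (hn : 0 < n)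
    (hB : 0 < ∑ i ∈ range n, σ2 i) {η : ℝ} (hη : 0 < η) :
    P.real {ω | η * ∑ i ∈ range n, σ2 i ≤ n * ((∑ i ∈ range n, Z i ω) / n) ^ 2}
      ≤ 1 / (η * n) := by
  have hset : {ω | η * ∑ i ∈ range n, σ2 i ≤ n * ((∑ i ∈ range n, Z i ω) / n) ^ 2}
      = {ω | η * (∑ i ∈ range n, σ2 i) * n ≤ (∑ i ∈ range n, Z i ω) ^ 2} := by
    ext ω
    have hn' : (n : ℝ) ≠ 0 := by positivity
    rw [Set.mem_ofPred_eq, Set.mem_ofPred_eq, div_pow, mul_div_assoc', sq (n : ℝ),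
      mul_div_mul_left _ _ hn', le_div_iff₀ (by positivity)]
  have hmarkov := mul_meas_ge_le_integral_of_nonneg (ae_of_all P fun ω => sq_nonneg _)
    ((memLp_finsetSum (range n) fun i _ => hL2 i).integrable_sq) (η * (∑ i ∈ range n, σ2 i) * n)
  rw [integral_sum_sq_eq_sum hindep hL2 hmean hvar, ← hset] at hmarkov
  rw [le_div_iff₀ (by positivity)]
  nlinarith

theorem tendsto_measure_exists_le_abs_sum_sq_sub (hmeas : ∀ i, Measurable (Z i))
    (hindep : iIndepFun Z P) (hL2 : ∀ i, MemLp (Z i) 2 P) (hvar : ∀ i, ∫ ω, Z i ω ^ 2 ∂P = σ2 i)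
    (hpos : ∀ i, 0 < σ2 i)
    (hLind : ∀ ε > (0 : ℝ), Tendsto (fun n => (∑ i ∈ range n, σ2 i)⁻¹ * ∑ i ∈ range n,
      ∫ ω in {ω | ε * √(∑ j ∈ range n, σ2 j) ≤ |Z i ω|}, Z i ω ^ 2 ∂P) atTop (𝓝 0))
    {η : ℝ} (hη : 0 < η) :
    Tendsto (fun n => P {ω | ∃ k ≤ n, η * ∑ i ∈ range n, σ2 i ≤
      |∑ i ∈ range k, Z i ω ^ 2 - ∑ i ∈ range k, σ2 i|}) atTop (𝓝 0) := by
  refine tendsto_measure_zero_of_forall_eventually_measureReal_le fun a ha => ?_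
  obtain ⟨m, hm⟩ := exists_nat_gt (4 / η)
  have hm0 : 0 < m := by exact_mod_cast (div_pos four_pos hη).trans hm
  have hmη : 4 ≤ η * m := by rw [div_lt_iff₀ hη] at hm; linarith
  set δ := η / 4 * √(a / (2 * (m + 1)))
  have hδ : 0 < δ := by positivity
  have hcheb : (m + 1) * (4 * δ / η) ^ 2 = a / 2 := by
    rw [show 4 * δ / η = √(a / (2 * (m + 1))) by simp only [δ]; field_simp,
      Real.sq_sqrt (by positivity)]
    field_simp
  have hmarkov : 4 / η * (η * a / 8) = a / 2 := by field_simp; ring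
  filter_upwards [eventually_gt_atTop 0,
    eventually_forall_le_mul_sum_of_lindeberg hmeas hL2 hvar hpos hLind (div_pos hη four_pos),
    (hLind δ hδ).eventually_lt_const (lt_min (div_pos hη four_pos) (by positivity : 0 < η * a / 8))]
    with n hn hsmall hL
  refine (measureReal_exists_le_abs_sum_sq_sub_le hmeas hindep hL2 hvar hpos hn hm0 hη hmη hsmall
    (hL.le.trans (min_le_left _ _))).trans ?_
  have := mul_le_mul_of_nonneg_left (hL.le.trans (min_le_right _ _)) (by positivity : 0 ≤ 4 / η)
  linarith

theorem tendsto_measure_le_mul_mean_sq (hindep : iIndepFun Z P) (hL2 : ∀ i, MemLp (Z i) 2 P)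
    (hmean : ∀ i, ∫ ω, Z i ω ∂P = 0) (hvar : ∀ i, ∫ ω, Z i ω ^ 2 ∂P = σ2 i)
    (hpos : ∀ i, 0 < σ2 i) {η : ℝ} (hη : 0 < η) :
    Tendsto (fun n : ℕ => P {ω | η * ∑ i ∈ range n, σ2 i ≤
      n * ((∑ i ∈ range n, Z i ω) / n) ^ 2}) atTop (𝓝 0) := by
  refine tendsto_measure_zero_of_forall_eventually_measureReal_le fun a ha => ?_
  filter_upwards [eventually_gt_atTop 0, eventually_ge_atTop ⌈(η * a)⁻¹⌉₊] with n hn hN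
  refine (measureReal_le_mul_mean_sq_le hindep hL2 hmean hvar hn
    (sum_pos (fun i _ => hpos i) (nonempty_range_iff.2 hn.ne')) hη).trans ?_
  have hN' : (η * a)⁻¹ ≤ n := (Nat.le_ceil _).trans (by exact_mod_cast hN)
  rw [inv_le_iff_one_le_mul₀ (by positivity)] at hN'
  rw [div_le_iff₀ (by positivity)]
  linarith

end Probability

/-- Under Lindeberg's condition,
`max_{0≤k≤n} |s_k²/s_n² − ∑_{i=1}^k (Z_i − Z̄_n)² / ∑_{i=1}^n (Z_i − Z̄_n)²|`
converges to 0 in probability. -/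
theorem max_partial_variance_ratio_nearness
    {Ω : Type*} [MeasurableSpace Ω] (P : Measure Ω) [IsProbabilityMeasure P]
    (Z : ℕ → Ω → ℝ) (σ2 : ℕ → ℝ)
    (hmeas : ∀ i, Measurable (Z i))
    (hindep : iIndepFun Z P)
    (hL2 : ∀ i, MemLp (Z i) 2 P)
    (hmean : ∀ i, ∫ ω, Z i ω ∂P = 0)
    (hvar : ∀ i, ∫ ω, (Z i ω) ^ 2 ∂P = σ2 i)
    (hpos : ∀ i, 0 < σ2 i)
    (hLind : ∀ ε > (0 : ℝ), Tendsto (fun n =>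
      (∑ i ∈ Finset.range n, σ2 i)⁻¹ *
        ∑ i ∈ Finset.range n,
          ∫ ω in {ω | ε * Real.sqrt (∑ j ∈ Finset.range n, σ2 j) ≤ |Z i ω|}, (Z i ω) ^ 2 ∂P)
      atTop (nhds 0)) :
    ∀ ε > (0 : ℝ), Tendsto (fun n =>
      P {ω | ∃ k ∈ Finset.range (n+1),
        ε ≤ |(∑ i ∈ Finset.range k, σ2 i) / (∑ i ∈ Finset.range n, σ2 i) -
          (∑ i ∈ Finset.range k, (Z i ω - (∑ j ∈ Finset.range n, Z j ω) / n) ^ 2) /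
            ∑ i ∈ Finset.range n, (Z i ω - (∑ j ∈ Finset.range n, Z j ω) / n) ^ 2|})
      atTop (nhds 0) := by
  intro ε hε
  set c := min (ε / 20) (1 / 10)
  have hc : 0 < c := lt_min (by positivity) (by norm_num)
  have hc5 : 5 * c < 1 := by linarith [min_le_right (ε / 20) (1 / 10)]
  have hcε : 10 * c < ε := by linarith [min_le_left (ε / 20) (1 / 10)]
  have hlim := (tendsto_measure_exists_le_abs_sum_sq_sub hmeas hindep hL2 hvar hpos hLind hc).add
    (tendsto_measure_le_mul_mean_sq hindep hL2 hmean hvar hpos (pow_pos hc 2))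
  rw [add_zero] at hlim
  refine tendsto_of_tendsto_of_tendsto_of_le_of_le' tendsto_const_nhds hlim
    (Eventually.of_forall fun _ => zero_le) ?_
  filter_upwards [eventually_gt_atTop 0] with n hn
  refine (measure_mono ?_).trans (measure_union_le _ _)
  rintro ω ⟨k, hk, hkε⟩
  by_contra hω
  simp only [Set.mem_union, Set.mem_ofPred_eq, not_or, not_exists, not_and, not_le] at hω
  exact hkε.not_gt <| (abs_div_sub_div_sum_sub_sq_le (b := fun k => ∑ i ∈ range k, σ2 i)
    (z := fun i => Z i ω) hc hc5 (sum_pos (fun i _ => hpos i) (nonempty_range_iff.2 hn.ne'))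
    (fun k hk => (hω.1 k hk).le) hω.2.le (Nat.lt_succ_iff.1 (mem_range.1 hk))).trans_lt hcε
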